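/- arXiv:2412.18229 — 8 statements merged into one kernel-verified Lean document; each statement's English description precedes it below -/
import Mathlib

section
/- Let η > 0 and let f : ℝ → ℝ be differentiable. Define on (0,∞) the curve γ₂(t) = (t·sinh η·cosh(coth η·ln t), t·sinh η·sinh(coth η·ln t), f(t·sinh η)), i.e. γ₂(t) = R₁(u(t), v(t)) with u(t) = t·sinh η and v(t) = coth η·ln t. Then for every t > 0: (i) B(γ₂'(t), γ₂'(t)) = −1, i.e. (d/dt of the first component)² − (d/dt of the second component)² = −1, so γ₂ is a unit-speed time-like curve; and (ii) (first component of γ₂'(t))·cosh(v(t)) − (second component of γ₂'(t))·sinh(v(t)) = sinh η, so the pseudo-isotropic scalar product of γ₂'(t) with the unit space-like meridian tangent (cosh v(t), sinh v(t), f'(u(t))) has absolute value sinh η; hence γ₂ cuts all meridians of R₁ at the constant pseudo-isotropic angle η. (Theorem 3.2: time-like loxodromes on rotational surfaces with space-like meridians.) -/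
theorem aux_deriv_cosh (a c t : ℝ) (ht : 0 < t) :
    HasDerivAt (fun s : ℝ => s * a * Real.cosh (c * Real.log s))
      (a * Real.cosh (c * Real.log t) + t * a * (Real.sinh (c * Real.log t) * (c * (1 / t)))) t := by
  have hlog : HasDerivAt Real.log (1 / t) t := by simpa [one_div] using Real.hasDerivAt_log (ne_of_gt ht)
  have h1 : HasDerivAt (fun s : ℝ => c * Real.log s) (c * (1 / t)) t := hlog.const_mul c
  have hc := h1.cosh
  have hs : HasDerivAt (fun s : ℝ => s * a) a t := by
    simpa using (hasDerivAt_id t).mul_const a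
  exact (hs.mul hc).congr_deriv (by ring)

theorem aux_deriv_sinh (a c t : ℝ) (ht : 0 < t) :
    HasDerivAt (fun s : ℝ => s * a * Real.sinh (c * Real.log s))
      (a * Real.sinh (c * Real.log t) + t * a * (Real.cosh (c * Real.log t) * (c * (1 / t)))) t := by
  have hlog : HasDerivAt Real.log (1 / t) t := by simpa [one_div] using Real.hasDerivAt_log (ne_of_gt ht)
  have h1 : HasDerivAt (fun s : ℝ => c * Real.log s) (c * (1 / t)) t := hlog.const_mul c
  have hc := h1.sinh
  have hs : HasDerivAt (fun s : ℝ => s * a) a t := by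
    simpa using (hasDerivAt_id t).mul_const a
  exact (hs.mul hc).congr_deriv (by ring)

/-- Theorem 3.2: the time-like loxodromes on the rotational surfaces with
space-like meridians `R₁(u,v) = (u cosh v, u sinh v, f(u))` in pseudo-isotropic
space.  The curve `γ₂(t) = R₁(t sinh η, coth η · ln t)` is a unit-speed
time-like curve whose pseudo-isotropic scalar product with the unit space-like
meridian tangent `(cosh v(t), sinh v(t), f'(u(t)))` equals `sinh η`, hence it
cuts all meridians at the constant pseudo-isotropic angle `η`. -/
theorem timelike_loxodrome_spacelike_meridian
    (η : ℝ) (hη : 0 < η) (f : ℝ → ℝ) (hf : Differentiable ℝ f) :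
    ∀ t : ℝ, 0 < t →
      -- (i) γ₂ is unit-speed time-like: B(γ₂'(t), γ₂'(t)) = −1
      ((deriv (fun s : ℝ =>
            s * Real.sinh η * Real.cosh (Real.cosh η / Real.sinh η * Real.log s)) t) ^ 2
        - (deriv (fun s : ℝ =>
            s * Real.sinh η * Real.sinh (Real.cosh η / Real.sinh η * Real.log s)) t) ^ 2
          = -1) ∧
      -- (ii) B(γ₂'(t), β'(t)) = sinh η, where β'(t) = (cosh v(t), sinh v(t), f'(u(t)))
      ((deriv (fun s : ℝ =>
            s * Real.sinh η * Real.cosh (Real.cosh η / Real.sinh η * Real.log s)) t)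
          * Real.cosh (Real.cosh η / Real.sinh η * Real.log t)
        - (deriv (fun s : ℝ =>
            s * Real.sinh η * Real.sinh (Real.cosh η / Real.sinh η * Real.log s)) t)
          * Real.sinh (Real.cosh η / Real.sinh η * Real.log t)
          = Real.sinh η) := by
  intro t ht
  have hsη : Real.sinh η ≠ 0 := ne_of_gt (Real.sinh_pos_iff.mpr hη)
  have ht' : t ≠ 0 := ne_of_gt ht
  set c := Real.cosh η / Real.sinh η with hc
  set v := c * Real.log t with hv
  have d1 : deriv (fun s : ℝ => s * Real.sinh η * Real.cosh (c * Real.log s)) t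
      = Real.sinh η * Real.cosh v + Real.cosh η * Real.sinh v := by
    rw [(aux_deriv_cosh (Real.sinh η) c t ht).deriv]
    field_simp [hc]
    have key : Real.sinh η * c = Real.cosh η := by rw [hc]; field_simp
    rw [← hv]; linear_combination Real.sinh v * key
  have d2 : deriv (fun s : ℝ => s * Real.sinh η * Real.sinh (c * Real.log s)) t
      = Real.sinh η * Real.sinh v + Real.cosh η * Real.cosh v := by
    rw [(aux_deriv_sinh (Real.sinh η) c t ht).deriv]
    field_simp [hc]
    have key : Real.sinh η * c = Real.cosh η := by rw [hc]; field_simp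
    rw [← hv]; linear_combination Real.cosh v * key
  have pyη := Real.cosh_sq_sub_sinh_sq η
  have pyv := Real.cosh_sq_sub_sinh_sq v
  constructor
  · rw [d1, d2]; nlinarith [pyη, pyv]
  · rw [d1, d2]; linear_combination Real.sinh η * pyv
end

section
/- Let η > 0 and let f : ℝ → ℝ be differentiable. Define on (0,∞) the curve γ₃(t) = (t·sinh η·sinh(coth η·ln t), t·sinh η·cosh(coth η·ln t), f(t·sinh η)), i.e. γ₃(t) = R₂(u(t), v(t)) with u(t) = t·sinh η and v(t) = coth η·ln t. Then for every t > 0: (i) B(γ₃'(t), γ₃'(t)) = 1, i.e. (d/dt of the first component)² − (d/dt of the second component)² = 1, so γ₃ is a unit-speed space-like curve; and (ii) (first component of γ₃'(t))·sinh(v(t)) − (second component of γ₃'(t))·cosh(v(t)) = −sinh η, so the pseudo-isotropic scalar product of γ₃'(t) with the unit time-like meridian tangent (sinh v(t), cosh v(t), f'(u(t))) has absolute value sinh η; hence γ₃ cuts all meridians of R₂ at the constant pseudo-isotropic angle η. (Theorem 3.3: space-like loxodromes on rotational surfaces with time-like meridians.) -/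
private lemma deriv_aux_sinh (c a : ℝ) {t : ℝ} (ht : 0 < t) :
    HasDerivAt (fun s : ℝ => s * a * Real.sinh (c * Real.log s))
      (a * Real.sinh (c * Real.log t) + a * c * Real.cosh (c * Real.log t)) t := by
  have h1 : HasDerivAt (fun s : ℝ => s * a) a t := by simpa using (hasDerivAt_id t).mul_const a
  have h2 : HasDerivAt (fun s : ℝ => c * Real.log s) (c * (1 / t)) t :=
    ((Real.hasDerivAt_log ht.ne').const_mul c).congr_deriv (by ring)
  have h3 : HasDerivAt (fun s : ℝ => Real.sinh (c * Real.log s))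
      (Real.cosh (c * Real.log t) * (c * (1 / t))) t :=
    (Real.hasDerivAt_sinh _).comp t h2
  have := h1.mul h3
  refine this.congr_deriv ?_
  field_simp [ht.ne']

private lemma deriv_aux_cosh (c a : ℝ) {t : ℝ} (ht : 0 < t) :
    HasDerivAt (fun s : ℝ => s * a * Real.cosh (c * Real.log s))
      (a * Real.cosh (c * Real.log t) + a * c * Real.sinh (c * Real.log t)) t := by
  have h1 : HasDerivAt (fun s : ℝ => s * a) a t := by simpa using (hasDerivAt_id t).mul_const a
  have h2 : HasDerivAt (fun s : ℝ => c * Real.log s) (c * (1 / t)) t :=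
    ((Real.hasDerivAt_log ht.ne').const_mul c).congr_deriv (by ring)
  have h3 : HasDerivAt (fun s : ℝ => Real.cosh (c * Real.log s))
      (Real.sinh (c * Real.log t) * (c * (1 / t))) t :=
    (Real.hasDerivAt_cosh _).comp t h2
  have := h1.mul h3
  refine this.congr_deriv ?_
  field_simp [ht.ne']

/-- Theorem 3.3: the space-like loxodromes on the rotational surfaces with
time-like meridians `R₂(u,v) = (u sinh v, u cosh v, f(u))` in pseudo-isotropic
space.  The curve `γ₃(t) = R₂(t sinh η, coth η · ln t)` is a unit-speed
space-like curve whose pseudo-isotropic scalar product with the unit time-like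
meridian tangent `(sinh v(t), cosh v(t), f'(u(t)))` equals `−sinh η`, hence it
cuts all meridians at the constant pseudo-isotropic angle `η`. -/
theorem spacelike_loxodrome_timelike_meridian
    (η : ℝ) (hη : 0 < η) (f : ℝ → ℝ) (hf : Differentiable ℝ f) :
    ∀ t : ℝ, 0 < t →
      -- (i) γ₃ is unit-speed space-like: B(γ₃'(t), γ₃'(t)) = 1
      ((deriv (fun s : ℝ =>
            s * Real.sinh η * Real.sinh (Real.cosh η / Real.sinh η * Real.log s)) t) ^ 2
        - (deriv (fun s : ℝ =>
            s * Real.sinh η * Real.cosh (Real.cosh η / Real.sinh η * Real.log s)) t) ^ 2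
          = 1) ∧
      -- (ii) B(γ₃'(t), β'(t)) = −sinh η, where β'(t) = (sinh v(t), cosh v(t), f'(u(t)))
      ((deriv (fun s : ℝ =>
            s * Real.sinh η * Real.sinh (Real.cosh η / Real.sinh η * Real.log s)) t)
          * Real.sinh (Real.cosh η / Real.sinh η * Real.log t)
        - (deriv (fun s : ℝ =>
            s * Real.sinh η * Real.cosh (Real.cosh η / Real.sinh η * Real.log s)) t)
          * Real.cosh (Real.cosh η / Real.sinh η * Real.log t)
          = -Real.sinh η) := by
  intro t ht
  set a := Real.sinh η with ha
  set b := Real.cosh η with hb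
  have ha0 : a ≠ 0 := by positivity
  set c := b / a with hc
  have hac : a * c = b := by rw [hc]; field_simp
  set S := Real.sinh (c * Real.log t) with hS
  set C := Real.cosh (c * Real.log t) with hC
  have d1 : deriv (fun s : ℝ => s * a * Real.sinh (c * Real.log s)) t = a * S + a * c * C :=
    (deriv_aux_sinh c a ht).deriv
  have d2 : deriv (fun s : ℝ => s * a * Real.cosh (c * Real.log s)) t = a * C + a * c * S :=
    (deriv_aux_cosh c a ht).deriv
  have hpyth : C ^ 2 - S ^ 2 = 1 := by
    have := Real.cosh_sq_sub_sinh_sq (c * Real.log t)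
    rw [hS, hC]; nlinarith [this]
  have hab : b ^ 2 - a ^ 2 = 1 := by
    have := Real.cosh_sq_sub_sinh_sq η
    nlinarith [this]
  rw [d1, d2, hac]
  constructor
  · linear_combination (C ^ 2 - S ^ 2) * hab + hpyth
  · linear_combination (-a) * hpyth
end

section
/- Let φ > 0 and let f : ℝ → ℝ be differentiable. Define on (0,∞) the curve γ₄(t) = (−t·cosh φ·sinh(tanh φ·ln t), −t·cosh φ·cosh(tanh φ·ln t), f(−t·cosh φ)), i.e. γ₄(t) = R₂(u(t), v(t)) with u(t) = −t·cosh φ and v(t) = tanh φ·ln t. Then for every t > 0: (i) B(γ₄'(t), γ₄'(t)) = −1, i.e. (d/dt of the first component)² − (d/dt of the second component)² = −1, so γ₄ is a unit-speed time-like curve; and (ii) (first component of γ₄'(t))·sinh(v(t)) − (second component of γ₄'(t))·cosh(v(t)) = cosh φ, so the pseudo-isotropic scalar product of γ₄'(t) with the unit time-like meridian tangent (sinh v(t), cosh v(t), f'(u(t))) equals cosh φ; hence γ₄ cuts all meridians of R₂ at the constant pseudo-isotropic angle φ. (Theorem 3.4: time-like loxodromes on rotational surfaces with time-like meridians.) 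-/
private lemma deriv_sinh_comp (φ t : ℝ) (ht : 0 < t) :
    HasDerivAt (fun s : ℝ => -(s * Real.cosh φ) * Real.sinh (Real.tanh φ * Real.log s))
      (-(Real.cosh φ) * (Real.sinh (Real.tanh φ * Real.log t)
        + Real.tanh φ * Real.cosh (Real.tanh φ * Real.log t))) t := by
  have h1 : HasDerivAt (fun s : ℝ => Real.tanh φ * Real.log s) (Real.tanh φ * t⁻¹) t :=
    (Real.hasDerivAt_log ht.ne').const_mul _
  have h2 := h1.sinh
  have h3 : HasDerivAt (fun s : ℝ => -(s * Real.cosh φ)) (-(Real.cosh φ)) t := by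
    exact (hasDerivAt_mul_const (Real.cosh φ)).neg
  have := h3.mul h2
  refine this.congr_deriv ?_
  have ht0 := mul_inv_cancel₀ ht.ne'
  linear_combination (-Real.cosh φ * Real.tanh φ * Real.cosh (Real.tanh φ * Real.log t)) * ht0

private lemma deriv_cosh_comp (φ t : ℝ) (ht : 0 < t) :
    HasDerivAt (fun s : ℝ => -(s * Real.cosh φ) * Real.cosh (Real.tanh φ * Real.log s))
      (-(Real.cosh φ) * (Real.cosh (Real.tanh φ * Real.log t)
        + Real.tanh φ * Real.sinh (Real.tanh φ * Real.log t))) t := by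
  have h1 : HasDerivAt (fun s : ℝ => Real.tanh φ * Real.log s) (Real.tanh φ * t⁻¹) t :=
    (Real.hasDerivAt_log ht.ne').const_mul _
  have h2 := h1.cosh
  have h3 : HasDerivAt (fun s : ℝ => -(s * Real.cosh φ)) (-(Real.cosh φ)) t := by
    exact (hasDerivAt_mul_const (Real.cosh φ)).neg
  have := h3.mul h2
  refine this.congr_deriv ?_
  have ht0 := mul_inv_cancel₀ ht.ne'
  linear_combination (-Real.cosh φ * Real.tanh φ * Real.sinh (Real.tanh φ * Real.log t)) * ht0

/-- Theorem 3.4: the time-like loxodromes on the rotational surfaces with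
time-like meridians `R₂(u,v) = (u sinh v, u cosh v, f(u))` in pseudo-isotropic
space.  The curve `γ₄(t) = R₂(−t cosh φ, tanh φ · ln t)` is a unit-speed
time-like curve whose pseudo-isotropic scalar product with the unit time-like
meridian tangent `(sinh v(t), cosh v(t), f'(u(t)))` equals `cosh φ`, hence it
cuts all meridians at the constant pseudo-isotropic angle `φ`. -/
theorem timelike_loxodrome_timelike_meridian
    (φ : ℝ) (hφ : 0 < φ) (f : ℝ → ℝ) (hf : Differentiable ℝ f) :
    ∀ t : ℝ, 0 < t →
      -- (i) γ₄ is unit-speed time-like: B(γ₄'(t), γ₄'(t)) = −1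
      ((deriv (fun s : ℝ =>
            -(s * Real.cosh φ) * Real.sinh (Real.tanh φ * Real.log s)) t) ^ 2
        - (deriv (fun s : ℝ =>
            -(s * Real.cosh φ) * Real.cosh (Real.tanh φ * Real.log s)) t) ^ 2
          = -1) ∧
      -- (ii) B(γ₄'(t), β'(t)) = cosh φ, where β'(t) = (sinh v(t), cosh v(t), f'(u(t)))
      ((deriv (fun s : ℝ =>
            -(s * Real.cosh φ) * Real.sinh (Real.tanh φ * Real.log s)) t)
          * Real.sinh (Real.tanh φ * Real.log t)
        - (deriv (fun s : ℝ =>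
            -(s * Real.cosh φ) * Real.cosh (Real.tanh φ * Real.log s)) t)
          * Real.cosh (Real.tanh φ * Real.log t)
          = Real.cosh φ) := by
  intro t ht
  rw [(deriv_sinh_comp φ t ht).deriv, (deriv_cosh_comp φ t ht).deriv]
  set v := Real.tanh φ * Real.log t
  have hpy : Real.cosh v ^ 2 - Real.sinh v ^ 2 = 1 := Real.cosh_sq_sub_sinh_sq v
  have htanh : Real.tanh φ = Real.sinh φ / Real.cosh φ := Real.tanh_eq_sinh_div_cosh φ
  have hcpos : (0:ℝ) < Real.cosh φ := Real.cosh_pos φ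
  have hpyφ : Real.cosh φ ^ 2 - Real.sinh φ ^ 2 = 1 := Real.cosh_sq_sub_sinh_sq φ
  constructor
  · rw [htanh]
    field_simp
    linear_combination (Real.sinh v ^ 2 - Real.cosh v ^ 2) * hpyφ
      - hpy
  · nlinarith [hpy]
end

section
/- Let θ > 0 and let v : (0,∞) → ℝ be differentiable with continuous derivative, satisfying the ordinary differential equation cosh²θ − t²·cosh²θ·(v'(t))² = 1 for all t > 0. Then there exists a constant C ∈ ℝ such that either v(t) = tanh θ·ln t + C for all t > 0, or v(t) = −tanh θ·ln t + C for all t > 0. (General solution (3.10) of the ODE (3.9) arising for space-like loxodromes on rotational surfaces with space-like meridians.) -/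
open Set

/-- If `deriv v t = c / t` on `(0,∞)`, then `v t = c * log t + v 1` there. -/
lemma aux_const_of_deriv (v : ℝ → ℝ) (c : ℝ)
    (hv : ∀ t ∈ Set.Ioi (0 : ℝ), DifferentiableAt ℝ v t)
    (hd : ∀ t ∈ Set.Ioi (0 : ℝ), deriv v t = c / t) :
    ∀ t ∈ Set.Ioi (0 : ℝ), v t = c * Real.log t + v 1 := by
  set w : ℝ → ℝ := fun t => v t - c * Real.log t with hw
  have hW : ∀ x ∈ Set.Ioi (0 : ℝ), HasDerivAt w 0 x := by
    intro x hx
    have hx0 : (0:ℝ) < x := hx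
    have h1 : HasDerivAt v (c / x) x := by
      have := (hv x hx).hasDerivAt
      rwa [hd x hx] at this
    have h2 : HasDerivAt (fun t => c * Real.log t) (c * x⁻¹) x :=
      (Real.hasDerivAt_log hx0.ne').const_mul c
    have := h1.sub h2
    convert this using 1
    · rfl
    · rfl
    · rfl
    · rw [div_eq_mul_inv, sub_self]
  intro t ht
  have ht0 : (0:ℝ) < t := ht
  set a := min t 1 with ha
  set b := max t 1 with hb
  have ha0 : (0:ℝ) < a := lt_min ht0 one_pos
  have hab : a ≤ b := min_le_max
  have hsub : Set.Icc a b ⊆ Set.Ioi (0:ℝ) := fun x hx => lt_of_lt_of_le ha0 hx.1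
  have hconst : ∀ x ∈ Set.Icc a b, w x = w a := by
    apply constant_of_has_deriv_right_zero
    · intro x hx
      exact ((hW x (hsub hx)).continuousAt).continuousWithinAt
    · intro x hx
      exact (hW x (hsub ⟨hx.1, hx.2.le⟩)).hasDerivWithinAt
  have htmem : t ∈ Set.Icc a b := ⟨min_le_left _ _, le_max_left _ _⟩
  have h1mem : (1:ℝ) ∈ Set.Icc a b := ⟨min_le_right _ _, le_max_right _ _⟩
  have : w t = w 1 := (hconst t htmem).trans (hconst 1 h1mem).symm
  simp only [hw, Real.log_one, mul_zero, sub_zero] at this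
  linarith

/-- The general solution (3.10) of the ODE (3.9),
`cosh²θ − t²·cosh²θ·v'(t)² = 1` on `(0,∞)`: any solution `v` with continuous
derivative is of the form `v(t) = ±tanh θ · ln t + C` for some constant `C`. -/
theorem ode_spacelike_loxodrome_solution
    (θ : ℝ) (hθ : 0 < θ) (v : ℝ → ℝ)
    (hv : ∀ t ∈ Set.Ioi (0 : ℝ), DifferentiableAt ℝ v t)
    (hv' : ContinuousOn (deriv v) (Set.Ioi (0 : ℝ)))
    (hode : ∀ t ∈ Set.Ioi (0 : ℝ),
      Real.cosh θ ^ 2 - t ^ 2 * Real.cosh θ ^ 2 * (deriv v t) ^ 2 = 1) :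
    ∃ C : ℝ,
      (∀ t ∈ Set.Ioi (0 : ℝ), v t = Real.tanh θ * Real.log t + C) ∨
      (∀ t ∈ Set.Ioi (0 : ℝ), v t = -(Real.tanh θ) * Real.log t + C) := by
  set k := Real.tanh θ with hkdef
  have hc : (0:ℝ) < Real.cosh θ := Real.cosh_pos θ
  have hs : (0:ℝ) < Real.sinh θ := Real.sinh_pos_iff.mpr hθ
  have hk : 0 < k := by
    rw [hkdef, Real.tanh_eq_sinh_div_cosh]
    positivity
  have hk2 : k ^ 2 = Real.sinh θ ^ 2 / Real.cosh θ ^ 2 := by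
    rw [hkdef, Real.tanh_eq_sinh_div_cosh, div_pow]
  have hcsq : Real.cosh θ ^ 2 = Real.sinh θ ^ 2 + 1 := by
    rw [Real.cosh_sq]
  set g : ℝ → ℝ := fun t => t * deriv v t with hg
  have hgsq : ∀ t ∈ Set.Ioi (0:ℝ), g t = k ∨ g t = -k := by
    intro t ht
    have h := hode t ht
    have hsq : (g t) ^ 2 = k ^ 2 := by
      have hgt : g t = t * deriv v t := rfl
      rw [hgt, hk2, eq_div_iff (by positivity : Real.cosh θ ^ 2 ≠ 0)]
      linear_combination hcsq - h
    have : (g t - k) * (g t + k) = 0 := by nlinarith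
    rcases mul_eq_zero.mp this with h1 | h1
    · left; linarith
    · right; linarith
  have hgcont : ContinuousOn g (Set.Ioi (0:ℝ)) :=
    (continuousOn_id).mul hv'
  -- g is constant on (0,∞): it never takes value 0
  have hne : ∀ t ∈ Set.Ioi (0:ℝ), g t ≠ 0 := by
    intro t ht h0
    rcases hgsq t ht with h | h <;> rw [h0] at h <;> [exact hk.ne' h.symm; exact hk.ne' (by linarith)]
  have hsame : ∀ t ∈ Set.Ioi (0:ℝ), g t = g 1 := by
    intro t ht
    have h1 : (1:ℝ) ∈ Set.Ioi (0:ℝ) := by norm_num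
    by_contra hne'
    rcases hgsq t ht with hta | hta <;> rcases hgsq 1 h1 with h1a | h1a
    · exact hne' (hta.trans h1a.symm)
    · -- g t = k, g 1 = -k : 0 attained between
      rcases le_total t 1 with hle | hle
      · have hcc : ContinuousOn g (Set.Icc t 1) :=
          hgcont.mono (fun x hx => lt_of_lt_of_le ht hx.1)
        have := intermediate_value_Icc' hle hcc
          (show (0:ℝ) ∈ Set.Icc (g 1) (g t) by rw [hta, h1a]; constructor <;> linarith)
        obtain ⟨s, hs1, hs2⟩ := this
        exact hne s (lt_of_lt_of_le ht hs1.1) hs2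
      · have hcc : ContinuousOn g (Set.Icc 1 t) :=
          hgcont.mono (fun x hx => lt_of_lt_of_le one_pos hx.1)
        have := intermediate_value_Icc hle hcc
          (show (0:ℝ) ∈ Set.Icc (g 1) (g t) by rw [hta, h1a]; constructor <;> linarith)
        obtain ⟨s, hs1, hs2⟩ := this
        exact hne s (lt_of_lt_of_le one_pos hs1.1) hs2
    · -- g t = -k, g 1 = k
      rcases le_total t 1 with hle | hle
      · have hcc : ContinuousOn g (Set.Icc t 1) :=
          hgcont.mono (fun x hx => lt_of_lt_of_le ht hx.1)
        have := intermediate_value_Icc hle hcc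
          (show (0:ℝ) ∈ Set.Icc (g t) (g 1) by rw [hta, h1a]; constructor <;> linarith)
        obtain ⟨s, hs1, hs2⟩ := this
        exact hne s (lt_of_lt_of_le ht hs1.1) hs2
      · have hcc : ContinuousOn g (Set.Icc 1 t) :=
          hgcont.mono (fun x hx => lt_of_lt_of_le one_pos hx.1)
        have := intermediate_value_Icc' hle hcc
          (show (0:ℝ) ∈ Set.Icc (g t) (g 1) by rw [hta, h1a]; constructor <;> linarith)
        obtain ⟨s, hs1, hs2⟩ := this
        exact hne s (lt_of_lt_of_le one_pos hs1.1) hs2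
    · exact hne' (hta.trans h1a.symm)
  have h1 : (1:ℝ) ∈ Set.Ioi (0:ℝ) := by norm_num
  rcases hgsq 1 h1 with hcase | hcase
  · refine ⟨v 1, Or.inl ?_⟩
    have hd : ∀ t ∈ Set.Ioi (0:ℝ), deriv v t = k / t := by
      intro t ht
      have := (hsame t ht).trans hcase
      have ht0 : t ≠ 0 := (ne_of_gt ht)
      simp only [hg] at this
      rw [eq_div_iff ht0]
      linarith [this]
    exact aux_const_of_deriv v k hv hd
  · refine ⟨v 1, Or.inr ?_⟩
    have hd : ∀ t ∈ Set.Ioi (0:ℝ), deriv v t = -k / t := by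
      intro t ht
      have := (hsame t ht).trans hcase
      have ht0 : t ≠ 0 := (ne_of_gt ht)
      field_simp [hg] at this ⊢
      linarith [this]
    have := aux_const_of_deriv v (-k) hv hd
    intro t ht
    have h := this t ht
    linarith [h]
end

section
/- Let η > 0 and let v : (0,∞) → ℝ be differentiable with continuous derivative, satisfying the ordinary differential equation sinh²η − t²·sinh²η·(v'(t))² = −1 for all t > 0. Then there exists a constant C ∈ ℝ such that either v(t) = coth η·ln t + C for all t > 0, or v(t) = −coth η·ln t + C for all t > 0. (General solution of the ODE arising for time-like loxodromes on rotational surfaces with space-like meridians, Theorem 3.2.) -/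
/-- The general solution of the ODE `sinh²η − t²·sinh²η·v'(t)² = −1` on
`(0,∞)`, arising for time-like loxodromes on rotational surfaces with
space-like meridians (Theorem 3.2): any solution `v` with continuous derivative
is of the form `v(t) = ±coth η · ln t + C` for some constant `C`. -/
theorem ode_timelike_loxodrome_solution
    (η : ℝ) (hη : 0 < η) (v : ℝ → ℝ)
    (hv : ∀ t ∈ Set.Ioi (0 : ℝ), DifferentiableAt ℝ v t)
    (hv' : ContinuousOn (deriv v) (Set.Ioi (0 : ℝ)))
    (hode : ∀ t ∈ Set.Ioi (0 : ℝ),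
      Real.sinh η ^ 2 - t ^ 2 * Real.sinh η ^ 2 * (deriv v t) ^ 2 = -1) :
    ∃ C : ℝ,
      (∀ t ∈ Set.Ioi (0 : ℝ), v t = Real.cosh η / Real.sinh η * Real.log t + C) ∨
      (∀ t ∈ Set.Ioi (0 : ℝ), v t = -(Real.cosh η / Real.sinh η) * Real.log t + C) := by
  have hs : 0 < Real.sinh η := Real.sinh_pos_iff.2 hη
  have hc : 0 < Real.cosh η := Real.cosh_pos η
  set k : ℝ := Real.cosh η / Real.sinh η with hk
  have hkpos : 0 < k := div_pos hc hs
  -- deriv v t = ± k / t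
  have key : ∀ t ∈ Set.Ioi (0 : ℝ), deriv v t = k / t ∨ deriv v t = -(k / t) := by
    intro t ht
    have ht0 : (0 : ℝ) < t := ht
    have h := hode t ht
    have h2 : (t * Real.sinh η * deriv v t) ^ 2 = Real.cosh η ^ 2 := by
      have := Real.cosh_sq η
      nlinarith [this]
    have h3 : t * Real.sinh η * deriv v t = Real.cosh η ∨
        t * Real.sinh η * deriv v t = -Real.cosh η := sq_eq_sq_iff_eq_or_eq_neg.mp h2
    have hts : t * Real.sinh η ≠ 0 := by positivity
    rcases h3 with h3 | h3
    · left; field_simp [hk]; rw [hk]; field_simp; linarith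
    · right; field_simp [hk]; rw [hk]; field_simp; linarith
  -- sign constancy
  have hsign : (∀ t ∈ Set.Ioi (0 : ℝ), deriv v t = k / t) ∨
      (∀ t ∈ Set.Ioi (0 : ℝ), deriv v t = -(k / t)) := by
    by_contra hcon
    push_neg at hcon
    obtain ⟨⟨a, ha, hna⟩, ⟨b, hb, hnb⟩⟩ := hcon
    have hda : deriv v a = -(k / a) := (key a ha).resolve_left hna
    have hdb : deriv v b = k / b := (key b hb).resolve_right hnb
    have hsub : Set.uIcc a b ⊆ Set.Ioi (0 : ℝ) := by
      exact Set.ordConnected_Ioi.uIcc_subset ha hb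
    have hcont : ContinuousOn (deriv v) (Set.uIcc a b) := hv'.mono hsub
    have h0 : (0 : ℝ) ∈ Set.uIcc (deriv v a) (deriv v b) := by
      rw [hda, hdb]
      have h1 : 0 < k / a := div_pos hkpos ha
      have h2 : 0 < k / b := div_pos hkpos hb
      rcases le_total (-(k/a)) (k/b) with h | h
      · rw [Set.uIcc_of_le h]; constructor <;> linarith
      · rw [Set.uIcc_of_ge h]; constructor <;> linarith
    obtain ⟨c, hc', hc0⟩ := intermediate_value_uIcc hcont h0
    have hcI : c ∈ Set.Ioi (0 : ℝ) := hsub hc'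
    have hkc : k / c ≠ 0 := ne_of_gt (div_pos hkpos hcI)
    rcases key c hcI with h | h <;> rw [hc0] at h
    · exact hkc h.symm
    · exact hkc (neg_eq_zero.mp h.symm)
  have const : ∀ c : ℝ, (∀ t ∈ Set.Ioi (0 : ℝ), deriv v t = c / t) →
      ∀ t ∈ Set.Ioi (0 : ℝ), v t = c * Real.log t + v 1 := by
    intro c hd
    set w : ℝ → ℝ := fun t => v t - c * Real.log t with hw
    have hwd : ∀ t ∈ Set.Ioi (0 : ℝ), HasDerivAt w 0 t := by
      intro t ht
      have h1 : HasDerivAt v (deriv v t) t := (hv t ht).hasDerivAt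
      have h2 : HasDerivAt (fun t => c * Real.log t) (c * t⁻¹) t :=
        (Real.hasDerivAt_log (ne_of_gt ht)).const_mul c
      have h3 := h1.sub h2
      have : deriv v t - c * t⁻¹ = 0 := by
        rw [hd t ht]; field_simp; simp
      rwa [this] at h3
    intro t ht
    have h1 : (1 : ℝ) ∈ Set.Ioi (0 : ℝ) := by norm_num
    have hconst : w t = w 1 := by
      apply (convex_Ioi (0 : ℝ)).is_const_of_fderivWithin_eq_zero
        (f := w) (𝕜 := ℝ) ?_ ?_ ht h1
      · exact fun x hx => ((hwd x hx).differentiableAt).differentiableWithinAt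
      · intro x hx
        have := ((hwd x hx).hasFDerivAt.hasFDerivWithinAt).fderivWithin
          (isOpen_Ioi.uniqueDiffOn x hx)
        rw [this]
        ext
        simp
    have : v t - c * Real.log t = v 1 - c * Real.log 1 := hconst
    simp only [Real.log_one, mul_zero, sub_zero] at this
    linarith
  rcases hsign with h | h
  · exact ⟨v 1, Or.inl fun t ht => const k h t ht⟩
  · refine ⟨v 1, Or.inr fun t ht => ?_⟩
    have := const (-k) (fun t ht => by rw [h t ht]; ring) t ht
    rw [this]
end

section
/- Let c ≠ 0, c₁ > 0, c₂, c₅ ∈ ℝ, and let I ⊆ ℝ be an open interval on which c₁·t + c₂ > |c|. Define on I: u(t) = (1/√c₁)·√((c₁t + c₂)² − c²) and v(t) = (1/2)·ln((c₁t + c₂ − c)/(c₁t + c₂ + c)) + c₅. Then for all t ∈ I the geodesic equations hold: u''(t) = −u(t)·v'(t)² and u(t)²·v'(t) = c (in particular (d/dt)(u(t)²·v'(t)) = 0). Hence the curves γ₅(t) = R₁(u(t),v(t)) and γ₆(t) = R₂(u(t),v(t)) with these u, v are geodesics of the rotational surfaces with space-like and time-like meridians respectively. (Theorem 4.1(iii).)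 -/
open Real

private lemma affine_hasDerivAt (c₁ c₂ : ℝ) (s : ℝ) :
    HasDerivAt (fun x : ℝ => c₁ * x + c₂) c₁ s := by
  simpa using ((hasDerivAt_id s).const_mul c₁).add_const c₂

private lemma vderiv (c c₁ c₂ c₅ : ℝ) {s : ℝ} (hs : |c| < c₁ * s + c₂) :
    deriv (fun x : ℝ => (1 / 2) * Real.log ((c₁ * x + c₂ - c) / (c₁ * x + c₂ + c)) + c₅) s
      = c₁ * c / ((c₁ * s + c₂) ^ 2 - c ^ 2) := by
  have h1 : (0:ℝ) < c₁ * s + c₂ - c := by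
    have := neg_abs_le c; have := le_abs_self c; linarith
  have h2 : (0:ℝ) < c₁ * s + c₂ + c := by
    have := neg_abs_le c; have := le_abs_self c; linarith
  have hU : IsOpen {x : ℝ | |c| < c₁ * x + c₂} :=
    isOpen_lt continuous_const (by continuity)
  have heq : (fun x : ℝ => (1 / 2) * Real.log ((c₁ * x + c₂ - c) / (c₁ * x + c₂ + c)) + c₅)
      =ᶠ[nhds s]
      fun x => (1 / 2) * (Real.log (c₁ * x + c₂ - c) - Real.log (c₁ * x + c₂ + c)) + c₅ := by
    filter_upwards [hU.mem_nhds hs] with x hx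
    have h1 : (0:ℝ) < c₁ * x + c₂ - c := by
      have := neg_abs_le c; have := le_abs_self c; linarith [hx]
    have h2 : (0:ℝ) < c₁ * x + c₂ + c := by
      have := neg_abs_le c; have := le_abs_self c; linarith [hx]
    simp [Real.log_div h1.ne' h2.ne']
  rw [heq.deriv_eq]
  have hd1 : HasDerivAt (fun x : ℝ => c₁ * x + c₂ - c) c₁ s := by
    simpa using (affine_hasDerivAt c₁ c₂ s).sub_const c
  have hd2 : HasDerivAt (fun x : ℝ => c₁ * x + c₂ + c) c₁ s := by
    simpa using (affine_hasDerivAt c₁ c₂ s).add_const c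
  have hlog : HasDerivAt
      (fun x => (1 / 2) * (Real.log (c₁ * x + c₂ - c) - Real.log (c₁ * x + c₂ + c)) + c₅)
      ((1 / 2) * (c₁ / (c₁ * s + c₂ - c) - c₁ / (c₁ * s + c₂ + c))) s :=
    (((hd1.log h1.ne').sub (hd2.log h2.ne')).const_mul (1/2)).add_const c₅
  rw [hlog.deriv]
  have hX : ((c₁ * s + c₂) ^ 2 - c ^ 2) = (c₁ * s + c₂ - c) * (c₁ * s + c₂ + c) := by ring
  field_simp [hX]
  ring

private lemma Xpos (c c₁ c₂ : ℝ) {s : ℝ} (hs : |c| < c₁ * s + c₂) :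
    (0:ℝ) < (c₁ * s + c₂) ^ 2 - c ^ 2 := by
  nlinarith [sq_abs c, abs_nonneg c, lt_of_le_of_lt (abs_nonneg c) hs]

private lemma uderiv (c c₁ c₂ : ℝ) {s : ℝ} (hc₁ : 0 < c₁) (hs : |c| < c₁ * s + c₂) :
    HasDerivAt (fun x : ℝ => (1 / Real.sqrt c₁) * Real.sqrt ((c₁ * x + c₂) ^ 2 - c ^ 2))
      ((1 / Real.sqrt c₁) * (c₁ * (c₁ * s + c₂) / Real.sqrt ((c₁ * s + c₂) ^ 2 - c ^ 2))) s := by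
  have hX : (0:ℝ) < (c₁ * s + c₂) ^ 2 - c ^ 2 := Xpos c c₁ c₂ hs
  have hin : HasDerivAt (fun x : ℝ => (c₁ * x + c₂) ^ 2 - c ^ 2)
      (2 * (c₁ * s + c₂) * c₁) s := by
    simpa using (((affine_hasDerivAt c₁ c₂ s).pow 2).sub_const (c ^ 2))
  have hsqrt := hin.sqrt hX.ne'
  have := hsqrt.const_mul (1 / Real.sqrt c₁)
  refine this.congr_deriv ?_
  have hs0 : Real.sqrt ((c₁ * s + c₂) ^ 2 - c ^ 2) ≠ 0 := by positivity
  ring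

/-- Theorem 4.1(iii): with
`u(t) = (1/√c₁)·√((c₁t + c₂)² − c²)` and
`v(t) = (1/2)·ln((c₁t + c₂ − c)/(c₁t + c₂ + c)) + c₅`,
the geodesic equations `u'' = −u·v'²` and `u²·v' = c` (hence `(u²·v')' = 0`)
hold on any open interval where `c₁t + c₂ > |c|`; thus the corresponding curves
`γ₅ = R₁(u,v)` and `γ₆ = R₂(u,v)` are geodesics of the rotational surfaces with
space-like and time-like meridians in pseudo-isotropic space. -/
theorem explicit_geodesics_rotational_surfaces
    (c c₁ c₂ c₅ : ℝ) (hc : c ≠ 0) (hc₁ : 0 < c₁)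
    (I : Set ℝ) (hIo : IsOpen I) (hIc : I.OrdConnected)
    (hI : ∀ t ∈ I, |c| < c₁ * t + c₂) :
    ∀ t ∈ I,
      (deriv (deriv (fun s : ℝ =>
          (1 / Real.sqrt c₁) * Real.sqrt ((c₁ * s + c₂) ^ 2 - c ^ 2))) t
        = -((1 / Real.sqrt c₁) * Real.sqrt ((c₁ * t + c₂) ^ 2 - c ^ 2))
            * (deriv (fun s : ℝ =>
                (1 / 2) * Real.log ((c₁ * s + c₂ - c) / (c₁ * s + c₂ + c)) + c₅) t) ^ 2) ∧
      (((1 / Real.sqrt c₁) * Real.sqrt ((c₁ * t + c₂) ^ 2 - c ^ 2)) ^ 2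
          * deriv (fun s : ℝ =>
              (1 / 2) * Real.log ((c₁ * s + c₂ - c) / (c₁ * s + c₂ + c)) + c₅) t
        = c) ∧
      (deriv (fun s : ℝ =>
          ((1 / Real.sqrt c₁) * Real.sqrt ((c₁ * s + c₂) ^ 2 - c ^ 2)) ^ 2
            * deriv (fun r : ℝ =>
                (1 / 2) * Real.log ((c₁ * r + c₂ - c) / (c₁ * r + c₂ + c)) + c₅) s) t
        = 0) := by
  intro t ht
  have hU : IsOpen {x : ℝ | |c| < c₁ * x + c₂} :=
    isOpen_lt continuous_const (by continuity)
  have htU : |c| < c₁ * t + c₂ := hI t ht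
  have hX : (0:ℝ) < (c₁ * t + c₂) ^ 2 - c ^ 2 := Xpos c c₁ c₂ htU
  have hsc₁ : Real.sqrt c₁ ≠ 0 := by positivity
  have hsX : Real.sqrt ((c₁ * t + c₂) ^ 2 - c ^ 2) ≠ 0 := by positivity
  have key2 : ∀ s : ℝ, |c| < c₁ * s + c₂ →
      ((1 / Real.sqrt c₁) * Real.sqrt ((c₁ * s + c₂) ^ 2 - c ^ 2)) ^ 2
        * deriv (fun x : ℝ =>
            (1 / 2) * Real.log ((c₁ * x + c₂ - c) / (c₁ * x + c₂ + c)) + c₅) s = c := by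
    intro s hs
    have hXs : (0:ℝ) < (c₁ * s + c₂) ^ 2 - c ^ 2 := Xpos c c₁ c₂ hs
    rw [vderiv c c₁ c₂ c₅ hs, mul_pow, div_pow, one_pow,
      Real.sq_sqrt hc₁.le, Real.sq_sqrt hXs.le]
    field_simp
  refine ⟨?_, key2 t htU, ?_⟩
  · have hderiv_eq : deriv (fun x : ℝ =>
        (1 / Real.sqrt c₁) * Real.sqrt ((c₁ * x + c₂) ^ 2 - c ^ 2)) =ᶠ[nhds t]
        fun s => (1 / Real.sqrt c₁) * (c₁ * (c₁ * s + c₂) / Real.sqrt ((c₁ * s + c₂) ^ 2 - c ^ 2)) := by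
      filter_upwards [hU.mem_nhds htU] with s hs
      exact (uderiv c c₁ c₂ hc₁ hs).deriv
    rw [hderiv_eq.deriv_eq]
    have hnum : HasDerivAt (fun s : ℝ => c₁ * (c₁ * s + c₂)) (c₁ * c₁) t := by
      simpa using (affine_hasDerivAt c₁ c₂ t).const_mul c₁
    have hin : HasDerivAt (fun x : ℝ => (c₁ * x + c₂) ^ 2 - c ^ 2)
        (2 * (c₁ * t + c₂) * c₁) t := by
      simpa using (((affine_hasDerivAt c₁ c₂ t).pow 2).sub_const (c ^ 2))
    have hden := hin.sqrt hX.ne'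
    have hdiv : HasDerivAt (fun s : ℝ => (1 / Real.sqrt c₁) * (c₁ * (c₁ * s + c₂) / Real.sqrt ((c₁ * s + c₂) ^ 2 - c ^ 2))) _ t :=
      (hnum.div hden hsX).const_mul (1 / Real.sqrt c₁)
    rw [hdiv.deriv, vderiv c c₁ c₂ c₅ htU]
    set S := Real.sqrt ((c₁ * t + c₂) ^ 2 - c ^ 2) with hS
    have hS2 : S ^ 2 = (c₁ * t + c₂) ^ 2 - c ^ 2 := Real.sq_sqrt hX.le
    rw [← hS2]
    field_simp
    linear_combination hS2
  · have heq : (fun s : ℝ =>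
        ((1 / Real.sqrt c₁) * Real.sqrt ((c₁ * s + c₂) ^ 2 - c ^ 2)) ^ 2
          * deriv (fun r : ℝ =>
              (1 / 2) * Real.log ((c₁ * r + c₂ - c) / (c₁ * r + c₂ + c)) + c₅) s)
        =ᶠ[nhds t] fun _ => c := by
      filter_upwards [hU.mem_nhds htU] with s hs
      exact key2 s hs
    rw [heq.deriv_eq]
    simp
end

section
/- Let c ∈ ℝ, c₁ > 0, c₂ ∈ ℝ, and let I ⊆ ℝ be an open interval on which (c₁·t + c₂)² > c². Define u(t) = (1/√c₁)·√((c₁t + c₂)² − c²) on I. Then u is differentiable on I and u'(t)² = (c₁·u(t)² + c²)/u(t)² for all t ∈ I. (The function (4.5) solves the ODE (4.4).) -/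
/-- The function (4.5), `u(t) = (1/√c₁)·√((c₁t + c₂)² − c²)`, is differentiable
and solves the ODE (4.4), `u'(t)² = (c₁·u(t)² + c²)/u(t)²`, on any open
interval where `(c₁t + c₂)² > c²`. -/
theorem explicit_solution_of_first_integral
    (c c₁ c₂ : ℝ) (hc₁ : 0 < c₁)
    (I : Set ℝ) (hIo : IsOpen I) (hIc : I.OrdConnected)
    (hI : ∀ t ∈ I, c ^ 2 < (c₁ * t + c₂) ^ 2) :
    (∀ t ∈ I, DifferentiableAt ℝ
        (fun s : ℝ => (1 / Real.sqrt c₁) * Real.sqrt ((c₁ * s + c₂) ^ 2 - c ^ 2)) t) ∧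
    (∀ t ∈ I,
      (deriv (fun s : ℝ => (1 / Real.sqrt c₁) * Real.sqrt ((c₁ * s + c₂) ^ 2 - c ^ 2)) t) ^ 2
        = (c₁ * ((1 / Real.sqrt c₁) * Real.sqrt ((c₁ * t + c₂) ^ 2 - c ^ 2)) ^ 2 + c ^ 2)
            / ((1 / Real.sqrt c₁) * Real.sqrt ((c₁ * t + c₂) ^ 2 - c ^ 2)) ^ 2) := by
  have key : ∀ t ∈ I, HasDerivAt
      (fun s : ℝ => (1 / Real.sqrt c₁) * Real.sqrt ((c₁ * s + c₂) ^ 2 - c ^ 2))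
      ((1 / Real.sqrt c₁) * ((2 * (c₁ * t + c₂) ^ 1 * c₁) /
        (2 * Real.sqrt ((c₁ * t + c₂) ^ 2 - c ^ 2)))) t := by
    intro t ht
    have hg : (0:ℝ) < (c₁ * t + c₂) ^ 2 - c ^ 2 := by linarith [hI t ht]
    have h1 : HasDerivAt (fun s : ℝ => c₁ * s + c₂) c₁ t := by
      simpa using ((hasDerivAt_id t).const_mul c₁).add_const c₂
    have h2 : HasDerivAt (fun s : ℝ => (c₁ * s + c₂) ^ 2 - c ^ 2)
        (2 * (c₁ * t + c₂) ^ 1 * c₁) t := by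
      simpa using (h1.pow 2).sub_const (c ^ 2)
    exact (h2.sqrt hg.ne').const_mul _
  refine ⟨fun t ht => (key t ht).differentiableAt, fun t ht => ?_⟩
  have hg : (0:ℝ) < (c₁ * t + c₂) ^ 2 - c ^ 2 := by linarith [hI t ht]
  rw [(key t ht).deriv]
  have hs : Real.sqrt ((c₁ * t + c₂) ^ 2 - c ^ 2) ^ 2 = (c₁ * t + c₂) ^ 2 - c ^ 2 :=
    Real.sq_sqrt hg.le
  have hs1 : Real.sqrt c₁ ^ 2 = c₁ := Real.sq_sqrt hc₁.le
  have hsne : Real.sqrt ((c₁ * t + c₂) ^ 2 - c ^ 2) ≠ 0 := by positivity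
  have hs1ne : Real.sqrt c₁ ≠ 0 := by positivity
  field_simp
  rw [hs1, hs]; ring
end

section
/- Let c ≠ 0, c₁ > 0, c₂, c₅ ∈ ℝ, and let I ⊆ ℝ be an open interval on which c₁·t + c₂ > |c|. Define on I: u(t) = (1/√c₁)·√((c₁t + c₂)² − c²) and v(t) = (1/2)·ln((c₁t + c₂ − c)/(c₁t + c₂ + c)) + c₅. Then v is differentiable on I and v'(t) = c/u(t)² for all t ∈ I. (The function (4.6) satisfies equation (4.2) with respect to the solution (4.5).) -/
lemma aux_hasDerivAt (c c₁ c₂ c₅ : ℝ) (hc : c ≠ 0) (hc₁ : 0 < c₁) (t : ℝ)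
    (hA : |c| < c₁ * t + c₂) :
    HasDerivAt
      (fun s : ℝ => (1 / 2) * Real.log ((c₁ * s + c₂ - c) / (c₁ * s + c₂ + c)) + c₅)
      (c / ((1 / Real.sqrt c₁) * Real.sqrt ((c₁ * t + c₂) ^ 2 - c ^ 2)) ^ 2) t := by
  set A := c₁ * t + c₂ with hAdef
  have hm : 0 < A - c := by
    have := neg_abs_le c
    have := le_abs_self c
    linarith
  have hp : 0 < A + c := by
    have := neg_abs_le c
    linarith
  have h1 : HasDerivAt (fun s : ℝ => c₁ * s + c₂ - c) c₁ t := by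
    have : HasDerivAt (fun s : ℝ => c₁ * s) c₁ t := by
      simpa using (hasDerivAt_id t).const_mul c₁
    simpa using (this.add_const c₂).add_const (-c)
  have h2 : HasDerivAt (fun s : ℝ => c₁ * s + c₂ + c) c₁ t := by
    have : HasDerivAt (fun s : ℝ => c₁ * s) c₁ t := by
      simpa using (hasDerivAt_id t).const_mul c₁
    simpa using (this.add_const c₂).add_const c
  have hdiv : HasDerivAt (fun s : ℝ => (c₁ * s + c₂ - c) / (c₁ * s + c₂ + c))
      ((c₁ * (A + c) - (A - c) * c₁) / (A + c) ^ 2) t := h1.div h2 hp.ne'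
  have hratio : (A - c) / (A + c) ≠ 0 := by positivity
  have hlog := (hdiv.log hratio)
  have hfinal := (hlog.const_mul (1 / 2 : ℝ)).add_const c₅
  refine hfinal.congr_deriv ?_
  have hs1 : Real.sqrt c₁ ^ 2 = c₁ := Real.sq_sqrt hc₁.le
  have hs2 : Real.sqrt (A ^ 2 - c ^ 2) ^ 2 = A ^ 2 - c ^ 2 := by
    apply Real.sq_sqrt
    nlinarith
  have hsq1 : Real.sqrt c₁ ≠ 0 := by positivity
  have hAc : A ^ 2 - c ^ 2 = (A - c) * (A + c) := by ring
  simp only [← hAdef]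
  rw [mul_pow, div_pow, hs2, hs1, one_pow, hAc]
  field_simp
  ring

/-- The function (4.6), `v(t) = (1/2)·ln((c₁t + c₂ − c)/(c₁t + c₂ + c)) + c₅`,
is differentiable and satisfies equation (4.2), `v'(t) = c/u(t)²`, with respect
to the solution (4.5), `u(t) = (1/√c₁)·√((c₁t + c₂)² − c²)`, on any open
interval where `c₁t + c₂ > |c|`. -/
theorem explicit_solution_satisfies_angular_momentum
    (c c₁ c₂ c₅ : ℝ) (hc : c ≠ 0) (hc₁ : 0 < c₁)
    (I : Set ℝ) (hIo : IsOpen I) (hIc : I.OrdConnected)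
    (hI : ∀ t ∈ I, |c| < c₁ * t + c₂) :
    (∀ t ∈ I, DifferentiableAt ℝ
        (fun s : ℝ => (1 / 2) * Real.log ((c₁ * s + c₂ - c) / (c₁ * s + c₂ + c)) + c₅) t) ∧
    (∀ t ∈ I,
      deriv (fun s : ℝ => (1 / 2) * Real.log ((c₁ * s + c₂ - c) / (c₁ * s + c₂ + c)) + c₅) t
        = c / ((1 / Real.sqrt c₁) * Real.sqrt ((c₁ * t + c₂) ^ 2 - c ^ 2)) ^ 2) := by
  constructor
  · intro t ht
    exact (aux_hasDerivAt c c₁ c₂ c₅ hc hc₁ t (hI t ht)).differentiableAt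
  · intro t ht
    exact (aux_hasDerivAt c c₁ c₂ c₅ hc hc₁ t (hI t ht)).deriv
end
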